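/- arXiv:2006.09638 — 6 statements merged into one kernel-verified Lean document; each statement's English description precedes it below -/
import Mathlib

section
/- Let S(α) = Σ_{i=1}^∞ X_i be a random walk where each X_i independently equals α > 1 with probability 1−p and −1 with probability p, started from initial value cα for a positive number c. Then the probability that the walk ever goes below zero is at most (p^α/(1−p)^2)^c. -/
/-!
With `r = p / (1 - p) ^ (2 / α)` one has `r ^ α = p ^ α / (1 - p) ^ 2`, and in the nontrivial case
`r < 1` the step mean `E[r ^ X] = (1 - p) r ^ α + p / r` is at most `1`; this last inequality is a
convexity estimate in `p`. Hence `r ^ S_n` is a nonnegative supermartingale starting at `1`, and by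
optional stopping and Markov's inequality it exceeds `r ^ (-c α)` (which it must do if the walk
goes below zero) with probability at most `r ^ (c α) = (p ^ α / (1 - p) ^ 2) ^ c`.
-/

open Set Real

lemma convexOn_one_sub_rpow {γ : ℝ} (hγ : 1 ≤ γ) : ConvexOn ℝ (Iic 1) fun s : ℝ => (1 - s) ^ γ := by
  have h := (convexOn_rpow hγ).comp_affineMap (AffineMap.const ℝ ℝ (1 : ℝ) - AffineMap.id ℝ ℝ)
  have e : ⇑(AffineMap.const ℝ ℝ (1 : ℝ) - AffineMap.id ℝ ℝ) = fun s => 1 - s := rfl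
  rw [e] at h
  simpa [Function.comp_def, preimage, Iic] using h

lemma exists_eq_one_sub_rpow {β : ℝ} (hβ : 0 < β) : ∃ s ∈ Icc (0 : ℝ) 1, s = (1 - s) ^ β := by
  have hcont : ContinuousOn (fun s : ℝ => s - (1 - s) ^ β) (Icc 0 1) :=
    (continuous_id.sub ((continuous_rpow_const hβ.le).comp (continuous_const.sub continuous_id)))
      |>.continuousOn
  obtain ⟨s, hs, hs0⟩ := intermediate_value_Icc zero_le_one hcont
    (show (0 : ℝ) ∈ Icc _ _ by simp [zero_rpow hβ.ne'])
  exact ⟨s, hs, sub_eq_zero.1 hs0⟩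

lemma le_of_le_one_sub_rpow {β p s : ℝ} (hβ : 0 ≤ β) (hp1 : p ≤ 1) (hs : s = (1 - s) ^ β)
    (hp : p ≤ (1 - p) ^ β) : p ≤ s := by
  by_contra! hsp
  have : (1 - p) ^ β ≤ (1 - s) ^ β := rpow_le_rpow (by linarith) (by linarith) hβ
  linarith

/-- The function `s ↦ s ^ α + (1 - s) ^ (1 + 2 / α) + s - 1` is convex on `[0, 1]` and vanishes at
`0` and at the fixed point `s₀ = (1 - s₀) ^ (2 / α)`, hence is nonpositive in between. -/
lemma rpow_add_one_sub_rpow_le {p α : ℝ} (hp : 0 ≤ p) (hp1 : p ≤ 1) (hα : 1 < α)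
    (h : p ≤ (1 - p) ^ (2 / α)) : p ^ α + (1 - p) ^ (1 + 2 / α) ≤ 1 - p := by
  have hβ : 0 < 2 / α := by positivity
  set G : ℝ → ℝ := fun s => s ^ α + (1 - s) ^ (1 + 2 / α) + (s - 1)
  have hG : ConvexOn ℝ (Icc 0 1) G :=
    (((convexOn_rpow hα.le).subset Icc_subset_Ici_self (convex_Icc 0 1)).add
      ((convexOn_one_sub_rpow (by linarith)).subset Icc_subset_Iic_self (convex_Icc 0 1))).add
      ((convexOn_id (convex_Icc 0 1)).sub (concaveOn_const 1 (convex_Icc 0 1)))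
  obtain ⟨s, hs, hss⟩ := exists_eq_one_sub_rpow hβ
  have hGs : G s = 0 := by
    have hsα : s ^ α = (1 - s) ^ 2 := by
      calc s ^ α = ((1 - s) ^ (2 / α)) ^ α := by rw [← hss]
        _ = (1 - s) ^ 2 := by
          rw [← rpow_mul (by linarith [hs.2]), div_mul_cancel₀ _ (by positivity), rpow_two]
    simp only [G]
    rw [rpow_add' (by linarith [hs.2]) (by positivity), rpow_one, ← hss, hsα]
    ring
  have hG0 : G 0 = 0 := by simp [G, zero_rpow (by positivity : α ≠ 0)]
  have hpG : G p ≤ 0 := by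
    have hseg : p ∈ segment ℝ 0 s := by
      rw [segment_eq_Icc hs.1]
      exact ⟨hp, le_of_le_one_sub_rpow hβ.le hp1 hss h⟩
    simpa [hG0, hGs] using hG.le_on_segment (left_mem_Icc.2 zero_le_one) hs hseg
  simp only [G] at hpG
  linarith

lemma div_rpow_two_div_rpow {p q α : ℝ} (hp : 0 ≤ p) (hq : 0 ≤ q) (hα : α ≠ 0) :
    (p / q ^ (2 / α)) ^ α = p ^ α / q ^ 2 := by
  rw [div_rpow hp (rpow_nonneg hq _), ← rpow_mul hq, div_mul_cancel₀ _ hα, rpow_two]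

lemma one_sub_mul_rpow_add_mul_inv_le_one {p α : ℝ} (hp : 0 < p) (hp1 : p < 1) (hα : 1 < α)
    (h : p ≤ (1 - p) ^ (2 / α)) :
    (1 - p) * (p / (1 - p) ^ (2 / α)) ^ α + p * (p / (1 - p) ^ (2 / α))⁻¹ ≤ 1 := by
  have hq : 0 < 1 - p := by linarith
  have key := rpow_add_one_sub_rpow_le hp.le hp1.le hα h
  rw [rpow_add' hq.le (by positivity), rpow_one] at key
  rw [div_rpow_two_div_rpow hp.le hq.le (by positivity), inv_div, mul_div_cancel₀ _ hp.ne']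
  calc (1 - p) * (p ^ α / (1 - p) ^ 2) + (1 - p) ^ (2 / α)
      = (p ^ α + (1 - p) * (1 - p) ^ (2 / α)) / (1 - p) := by field_simp
    _ ≤ 1 := by rw [div_le_one hq]; exact key

open MeasureTheory ProbabilityTheory Finset

section TwoPoint

variable {Ω : Type*} [MeasurableSpace Ω] {μ : Measure Ω} {X : Ω → ℝ} {a b : ℝ}

lemma ae_eq_or_eq_of_measure_preimage_add [IsProbabilityMeasure μ] (hX : Measurable X)
    (hab : a ≠ b) (h : μ (X ⁻¹' {a}) + μ (X ⁻¹' {b}) = 1) : ∀ᵐ ω ∂μ, X ω = a ∨ X ω = b := by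
  have hmeas : MeasurableSet (X ⁻¹' {a} ∪ X ⁻¹' {b}) :=
    (hX (measurableSet_singleton a)).union (hX (measurableSet_singleton b))
  have hunion : μ (X ⁻¹' {a} ∪ X ⁻¹' {b}) = μ Set.univ := by
    rw [measure_union ((Set.disjoint_singleton.2 hab).preimage X) (hX (measurableSet_singleton b)),
      h, measure_univ]
  exact (ae_iff_measure_eq hmeas.nullMeasurableSet).2 hunion

lemma comp_ae_eq_indicator_add_indicator (hab : a ≠ b) (h : ∀ᵐ ω ∂μ, X ω = a ∨ X ω = b)
    (g : ℝ → ℝ) :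
    (fun ω => g (X ω)) =ᵐ[μ]
      (X ⁻¹' {a}).indicator (fun _ => g a) + (X ⁻¹' {b}).indicator (fun _ => g b) := by
  filter_upwards [h] with ω hω
  rcases hω with hω | hω <;> simp [hω, hab, hab.symm]

variable [IsFiniteMeasure μ]

lemma integrable_comp_of_ae_eq_or_eq (hX : Measurable X) (hab : a ≠ b)
    (h : ∀ᵐ ω ∂μ, X ω = a ∨ X ω = b) (g : ℝ → ℝ) : Integrable (fun ω => g (X ω)) μ :=
  (((integrable_const (g a)).indicator (hX (measurableSet_singleton a))).add
    ((integrable_const (g b)).indicator (hX (measurableSet_singleton b)))).congr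
    (comp_ae_eq_indicator_add_indicator hab h g).symm

lemma integral_comp_of_ae_eq_or_eq (hX : Measurable X) (hab : a ≠ b)
    (h : ∀ᵐ ω ∂μ, X ω = a ∨ X ω = b) (g : ℝ → ℝ) :
    ∫ ω, g (X ω) ∂μ = μ.real (X ⁻¹' {a}) * g a + μ.real (X ⁻¹' {b}) * g b := by
  rw [integral_congr_ae (comp_ae_eq_indicator_add_indicator hab h g),
    integral_add' ((integrable_const _).indicator (hX (measurableSet_singleton a)))
      ((integrable_const _).indicator (hX (measurableSet_singleton b))),
    integral_indicator_const _ (hX (measurableSet_singleton a)),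
    integral_indicator_const _ (hX (measurableSet_singleton b)), smul_eq_mul, smul_eq_mul]

lemma integrable_exp_mul_and_mgf_le_one [IsProbabilityMeasure μ] {X : Ω → ℝ} (hX : Measurable X)
    {p α : ℝ} (hp : 0 < p) (hp1 : p < 1) (hα : 1 < α) (h : p ≤ (1 - p) ^ (2 / α))
    (hup : μ (X ⁻¹' {α}) = ENNReal.ofReal (1 - p)) (hdown : μ (X ⁻¹' {-1}) = ENNReal.ofReal p) :
    Integrable (fun ω => exp (log (p / (1 - p) ^ (2 / α)) * X ω)) μ ∧
      mgf X μ (log (p / (1 - p) ^ (2 / α))) ≤ 1 := by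
  set t := log (p / (1 - p) ^ (2 / α))
  have hq : 0 < 1 - p := by linarith
  have hr : 0 < p / (1 - p) ^ (2 / α) := by positivity
  have hne : α ≠ -1 := by linarith
  have hlaw : ∀ᵐ ω ∂μ, X ω = α ∨ X ω = -1 :=
    ae_eq_or_eq_of_measure_preimage_add hX hne
      (by rw [hup, hdown, ← ENNReal.ofReal_add hq.le hp.le, sub_add_cancel, ENNReal.ofReal_one])
  refine ⟨integrable_comp_of_ae_eq_or_eq hX hne hlaw fun x => exp (t * x), ?_⟩
  rw [mgf, integral_comp_of_ae_eq_or_eq hX hne hlaw fun x => exp (t * x), measureReal_def,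
    measureReal_def, hup, hdown, ENNReal.toReal_ofReal hq.le, ENNReal.toReal_ofReal hp.le,
    ← rpow_def_of_pos hr, ← rpow_def_of_pos hr, rpow_neg_one]
  exact one_sub_mul_rpow_add_mul_inv_le_one hp hp1 hα h

end TwoPoint

section Supermartingale

variable {Ω : Type*} {m0 : MeasurableSpace Ω} {μ : Measure Ω}

theorem ProbabilityTheory.iIndepFun.supermartingale_exp_mul_sum {X : ℕ → Ω → ℝ}
    (hind : iIndepFun X μ) (hX : ∀ i, Measurable (X i)) {t : ℝ}
    (hint : ∀ i, Integrable (fun ω => exp (t * X i ω)) μ)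
    (hmgf : ∀ i, mgf (X i) μ t ≤ 1) :
    Supermartingale (fun n ω => exp (t * ∑ i ∈ range (n + 1), X i ω))
      (Filtration.natural X fun i => (hX i).stronglyMeasurable) μ := by
  have : IsProbabilityMeasure μ := hind.isProbabilityMeasure
  set F := Filtration.natural X fun i => (hX i).stronglyMeasurable
  set M : ℕ → Ω → ℝ := fun n ω => exp (t * ∑ i ∈ range (n + 1), X i ω)
  have hM_int : ∀ n, Integrable (M n) μ := fun n => by
    simpa [M, Finset.sum_apply] using
      hind.integrable_exp_mul_sum hX (s := range (n + 1)) fun i _ => hint i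
  have hM_adapted : StronglyAdapted F M := fun n => by
    refine (measurable_exp.comp (Measurable.const_mul ?_ t)).stronglyMeasurable
    refine Finset.measurable_sum _ fun i hi => ?_
    exact ((Filtration.stronglyAdapted_natural (β := fun _ => ℝ) _).stronglyMeasurable_le
      (Nat.lt_succ_iff.1 (Finset.mem_range.1 hi))).measurable
  refine supermartingale_nat hM_adapted hM_int fun n => ?_
  have hsplit : M (n + 1) = M n * fun ω => exp (t * X (n + 1) ω) := by
    funext ω
    simp only [M, Pi.mul_apply, Finset.sum_range_succ _ (n + 1), mul_add, exp_add]
  have hindep_step : μ[fun ω => exp (t * X (n + 1) ω) | F n] =ᵐ[μ] fun _ => mgf (X (n + 1)) μ t :=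
    condExp_indep_eq (hX (n + 1)).comap_le (F.le n)
      (measurable_exp.comp ((comap_measurable (X (n + 1))).const_mul t)).stronglyMeasurable
      (hind.indep_comap_natural_of_lt _ n.lt_succ_self)
  have hpull := condExp_mul_of_stronglyMeasurable_left (m := F n) (hM_adapted n)
    (hsplit ▸ hM_int (n + 1)) (hint (n + 1))
  rw [← hsplit] at hpull
  filter_upwards [hpull, hindep_step] with ω h1 h2
  rw [h1, Pi.mul_apply, h2]
  exact mul_le_of_le_one_right (exp_pos _).le (hmgf _)

end Supermartingale

namespace MeasureTheory.Supermartingale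

variable {Ω : Type*} {m0 : MeasurableSpace Ω} {μ : Measure Ω} [IsFiniteMeasure μ]
  {F : Filtration ℕ m0} {M : ℕ → Ω → ℝ} {e : ℝ}

/-- Optional stopping at the first time `M` reaches `e`, followed by Markov's inequality. -/
theorem measure_exists_le_ge_le (hM : Supermartingale M F μ) (hnonneg : 0 ≤ M) (he : 0 < e)
    (N : ℕ) : μ {ω | ∃ n ≤ N, e ≤ M n ω} ≤ ENNReal.ofReal ((∫ ω, M 0 ω ∂μ) / e) := by
  set τ : Ω → ℕ∞ := fun ω => (hittingBtwn M (Set.Ici e) 0 N ω : ℕ)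
  have hτ : IsStoppingTime F τ :=
    hM.stronglyAdapted.adapted.isStoppingTime_hittingBtwn measurableSet_Ici
  have hτN : ∀ ω, τ ω ≤ N := fun ω => WithTop.coe_le_coe.2 (hittingBtwn_le ω)
  have hstop : ∫ ω, stoppedValue M τ ω ∂μ ≤ ∫ ω, M 0 ω ∂μ := by
    have h := hM.neg.expected_stoppedValue_mono (isStoppingTime_const F 0) hτ
      (fun _ => zero_le) hτN
    simp only [stoppedValue, Pi.neg_apply, integral_neg, neg_le_neg_iff] at h
    exact h
  have hsub : {ω | ∃ n ≤ N, e ≤ M n ω} ⊆ {ω | e ≤ stoppedValue M τ ω} := fun ω ⟨n, hn, hen⟩ =>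
    stoppedValue_hittingBtwn_mem ⟨n, ⟨Nat.zero_le n, hn⟩, hen⟩
  have hmarkov : e * μ.real {ω | e ≤ stoppedValue M τ ω} ≤ ∫ ω, stoppedValue M τ ω ∂μ :=
    mul_meas_ge_le_integral_of_nonneg (Filter.Eventually.of_forall fun ω => hnonneg _ ω)
      (integrable_stoppedValue ℕ hτ hM.integrable hτN) e
  calc μ {ω | ∃ n ≤ N, e ≤ M n ω} ≤ μ {ω | e ≤ stoppedValue M τ ω} := measure_mono hsub
    _ = ENNReal.ofReal (μ.real {ω | e ≤ stoppedValue M τ ω}) :=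
      (ofReal_measureReal (measure_ne_top _ _)).symm
    _ ≤ ENNReal.ofReal ((∫ ω, M 0 ω ∂μ) / e) := by
      refine ENNReal.ofReal_le_ofReal ?_
      rw [le_div_iff₀' he]
      exact hmarkov.trans hstop

theorem measure_exists_ge_le (hM : Supermartingale M F μ) (hnonneg : 0 ≤ M) (he : 0 < e) :
    μ {ω | ∃ n, e ≤ M n ω} ≤ ENNReal.ofReal ((∫ ω, M 0 ω ∂μ) / e) := by
  have hunion : {ω | ∃ n, e ≤ M n ω} = ⋃ N, {ω | ∃ n ≤ N, e ≤ M n ω} := by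
    ext ω
    simp only [Set.mem_ofPred_eq, Set.mem_iUnion]
    exact ⟨fun ⟨n, hn⟩ => ⟨n, n, le_rfl, hn⟩, fun ⟨_, n, _, hn⟩ => ⟨n, hn⟩⟩
  have hmono : Monotone fun N => {ω | ∃ n ≤ N, e ≤ M n ω} :=
    fun _ _ hNN' _ ⟨n, hn, hen⟩ => ⟨n, hn.trans hNN', hen⟩
  rw [hunion, hmono.measure_iUnion]
  exact iSup_le (hM.measure_exists_le_ge_le hnonneg he)

end MeasureTheory.Supermartingale

/-- A random walk with i.i.d. steps equal to `α > 1` with probability `1 - p`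
and `-1` with probability `p`, started from `c * α` with `c > 0`, goes below zero with
probability at most `(p ^ α / (1 - p) ^ 2) ^ c`. -/
theorem stmt0 {Ω : Type*} [MeasurableSpace Ω] (μ : Measure Ω) [IsProbabilityMeasure μ]
    (p α c : ℝ) (hp : 0 < p) (hp1 : p < 1) (hα : 1 < α) (hc : 0 < c)
    (X : ℕ → Ω → ℝ) (hmeas : ∀ i, Measurable (X i))
    (hindep : iIndepFun X μ)
    (hup : ∀ i, μ (X i ⁻¹' {α}) = ENNReal.ofReal (1 - p))
    (hdown : ∀ i, μ (X i ⁻¹' {-1}) = ENNReal.ofReal p) :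
    μ {ω | ∃ t : ℕ, c * α + ∑ i ∈ range t, X i ω < 0}
      ≤ ENNReal.ofReal ((p ^ α / (1 - p) ^ 2) ^ c) := by
  have hq : 0 < 1 - p := by linarith
  set r := p / (1 - p) ^ (2 / α)
  have hr : 0 < r := by positivity
  have hrα : r ^ α = p ^ α / (1 - p) ^ 2 := div_rpow_two_div_rpow hp.le hq.le (by positivity)
  rcases le_or_gt 1 (p ^ α / (1 - p) ^ 2) with hbig | hsmall
  · exact prob_le_one.trans (ENNReal.one_le_ofReal.2 (one_le_rpow hbig hc.le))
  have hr1 : r < 1 := by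
    contrapose! hsmall
    exact hrα ▸ one_le_rpow hsmall (by linarith)
  have hstep i := integrable_exp_mul_and_mgf_le_one (hmeas i) hp hp1 hα
    ((div_lt_one (by positivity)).1 hr1).le (hup i) (hdown i)
  set t := log r
  have hM := hindep.supermartingale_exp_mul_sum hmeas (fun i => (hstep i).1) fun i => (hstep i).2
  have hM0 : ∫ ω, exp (t * ∑ i ∈ range (0 + 1), X i ω) ∂μ ≤ 1 := by simpa [mgf] using (hstep 0).2
  calc μ {ω | ∃ t : ℕ, c * α + ∑ i ∈ range t, X i ω < 0}
      ≤ μ {ω | ∃ n, exp (t * -(c * α)) ≤ exp (t * ∑ i ∈ range (n + 1), X i ω)} := by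
        refine measure_mono fun ω ⟨k, hk⟩ => ?_
        obtain _ | n := k
        · simp only [range_zero, sum_empty, add_zero] at hk
          nlinarith
        · exact ⟨n, exp_le_exp.2 (mul_le_mul_of_nonpos_left (by linarith) (log_neg hr hr1).le)⟩
    _ ≤ ENNReal.ofReal ((∫ ω, exp (t * ∑ i ∈ range (0 + 1), X i ω) ∂μ) / exp (t * -(c * α))) :=
        hM.measure_exists_ge_le (fun _ _ => (exp_pos _).le) (exp_pos _)
    _ ≤ ENNReal.ofReal ((p ^ α / (1 - p) ^ 2) ^ c) := by
        refine ENNReal.ofReal_le_ofReal ?_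
        rw [← hrα, ← rpow_mul hr.le, rpow_def_of_pos hr, div_le_iff₀ (exp_pos _), ← exp_add,
          show t * (α * c) + t * -(c * α) = 0 by ring, exp_zero]
        exact hM0
end

section
/- Let G be a graph with incidence matrix A, let w minimize |𝟙 − Aw|₂, and set α = Aw. If a connected component of G contains an odd cycle (i.e., is not bipartite), then α_v = 1 for every vertex v in that component. -/
open Finset Matrix

/-!
The minimizer `w` satisfies the normal equations `Aᵀ (𝟙 - A w) = 0`. For the incidence matrix
the `e`-th normal equation reads `r u + r v = 0` on the residual `r = 𝟙 - A w` at the ends of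
`e`, so `r` changes sign along every edge. Around an odd closed walk this forces `r = -r`, i.e.
`r = 0` at a vertex of the walk, and propagating along a walk to any vertex of the component
gives `r = 0` there as well.
-/

theorem Matrix.transpose_mulVec_sub_mulVec_eq_zero_of_forall_le {m n : Type*} [Fintype m]
    [Fintype n] (A : Matrix m n ℝ) (b : m → ℝ) (w : n → ℝ)
    (hmin : ∀ w', ∑ i, (b i - (A *ᵥ w) i) ^ 2 ≤ ∑ i, (b i - (A *ᵥ w') i) ^ 2) :
    Aᵀ *ᵥ (b - A *ᵥ w) = 0 := by
  classical
  ext e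
  set r := b - A *ᵥ w
  -- the objective at `w + t • Pi.single e 1` exceeds its minimum by a quadratic in `t` with no
  -- constant term, so its nonpositive discriminant kills the linear coefficient
  have hquad : ∀ t : ℝ, 0 ≤ (∑ i, A i e ^ 2) * (t * t) + (-2 * (Aᵀ *ᵥ r) e) * t + 0 := by
    intro t
    have h := hmin (w + t • Pi.single e 1)
    simp only [mulVec_add, mulVec_smul, mulVec_single_one, Pi.add_apply, Pi.smul_apply,
      smul_eq_mul, col_apply] at h
    rw [← sub_nonneg, ← Finset.sum_sub_distrib] at h
    have hAr : (Aᵀ *ᵥ r) e = ∑ i, A i e * (b i - (A *ᵥ w) i) := rfl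
    rw [hAr, Finset.sum_mul, Finset.mul_sum, Finset.sum_mul, ← Finset.sum_add_distrib, add_zero]
    exact h.trans_eq (Finset.sum_congr rfl fun i _ => by ring)
  have hdiscr := discrim_le_zero hquad
  rw [discrim] at hdiscr
  simp only [Pi.zero_apply]
  nlinarith [sq_nonneg ((Aᵀ *ᵥ r) e)]

theorem SimpleGraph.Walk.eq_neg_one_pow_length_smul {V M : Type*} [AddCommGroup M]
    {G : SimpleGraph V} {f : V → M} (hf : ∀ u v, G.Adj u v → f u = -f v) {a b : V}
    (p : G.Walk a b) : f a = (-1 : ℤ) ^ p.length • f b := by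
  induction p with
  | nil => simp
  | cons h p ih => rw [hf _ _ h, ih, length_cons, pow_succ, mul_comm, mul_smul, neg_one_smul]

theorem SimpleGraph.Reachable.eq_zero_of_odd_closed_walk {V M : Type*} [AddCommGroup M]
    [IsAddTorsionFree M] {G : SimpleGraph V} {f : V → M} (hf : ∀ u v, G.Adj u v → f u = -f v)
    {u v : V} (p : G.Walk u u) (hodd : Odd p.length) (hvu : G.Reachable v u) : f v = 0 := by
  have hu : f u = 0 := by
    rw [← self_eq_neg]
    simpa [hodd.neg_one_pow] using p.eq_neg_one_pow_length_smul hf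
  obtain ⟨q⟩ := hvu
  simpa [hu] using q.eq_neg_one_pow_length_smul hf

theorem incidence_transpose_mulVec_apply {V E R : Type*} [Fintype V] [DecidableEq V]
    [NonAssocSemiring R] (ends : E → V × V) (A : Matrix V E R)
    (hA : ∀ i e, A i e = if i = (ends e).1 ∨ i = (ends e).2 then 1 else 0)
    (r : V → R) {e : E} (hne : (ends e).1 ≠ (ends e).2) :
    (Aᵀ *ᵥ r) e = r (ends e).1 + r (ends e).2 := by
  have hterm : ∀ i, A i e * r i = if i ∈ ({(ends e).1, (ends e).2} : Finset V) then r i else 0 := by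
    intro i
    simp only [hA, Finset.mem_insert, Finset.mem_singleton, ite_mul, one_mul, zero_mul]
  change ∑ i, A i e * r i = _
  rw [Finset.sum_congr rfl fun i _ => hterm i, Finset.sum_ite_mem, Finset.univ_inter,
    Finset.sum_pair hne]

/-- With `A` the incidence matrix of a graph `G`, `w` minimizing
`|𝟙 - A w|₂` and `α = A w`: if the connected component of a vertex `v` contains an odd
closed walk (i.e. is not bipartite), then `α_v = 1` for every vertex of that component. -/
theorem stmt4 {V E : Type*} [Fintype V] [Fintype E] [DecidableEq V]
    (ends : E → V × V) (hne : ∀ e, (ends e).1 ≠ (ends e).2)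
    (A : Matrix V E ℝ)
    (hA : ∀ i e, A i e = if i = (ends e).1 ∨ i = (ends e).2 then 1 else 0)
    (G : SimpleGraph V)
    (hG : ∀ u v, G.Adj u v ↔ u ≠ v ∧ ∃ e, ends e = (u, v) ∨ ends e = (v, u))
    (w : E → ℝ)
    (hmin : ∀ w' : E → ℝ,
      ∑ i, (1 - A.mulVec w i) ^ 2 ≤ ∑ i, (1 - A.mulVec w' i) ^ 2) :
    ∀ (v u : V) (walk : G.Walk u u), Odd walk.length → G.Reachable v u →
      A.mulVec w v = 1 := by
  intro v u p hodd hvu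
  set r : V → ℝ := 1 - A *ᵥ w
  have hnormal : Aᵀ *ᵥ r = 0 := A.transpose_mulVec_sub_mulVec_eq_zero_of_forall_le 1 w hmin
  have hedge (e : E) : r (ends e).1 = -r (ends e).2 := by
    rw [eq_neg_iff_add_eq_zero, ← incidence_transpose_mulVec_apply ends A hA r (hne e),
      hnormal, Pi.zero_apply]
  have hadj : ∀ a b, G.Adj a b → r a = -r b := by
    intro a b hab
    obtain ⟨-, e, he | he⟩ := (hG a b).mp hab
    · simpa [he] using hedge e
    · simpa [he, neg_eq_iff_eq_neg] using (hedge e).symm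
  have hv : 1 - (A *ᵥ w) v = 0 := hvu.eq_zero_of_odd_closed_walk hadj p hodd
  exact (sub_eq_zero.mp hv).symm
end

section
/- Let G be a graph with incidence matrix A, let w minimize |𝟙 − Aw|₂, and set α = Aw. If a connected component C = L ∪ R of G is bipartite (with parts L, R, |L| ≥ |R|, and at least one edge), then α_u = 1 + (|L|−|R|)/(|L|+|R|) for every u ∈ R, and α_v = 1 − (|L|−|R|)/(|L|+|R|) for every v ∈ L. -/
open Finset Matrix

/-- With `A` the incidence matrix of a graph `G`, `w` minimizing
`|𝟙 - A w|₂` and `α = A w`: if `C = L ∪ R` is a bipartite connected component with parts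
`L, R`, `|L| ≥ |R|`, and at least one edge, then `α_u = 1 + (|L|-|R|)/(|L|+|R|)` for
`u ∈ R` and `α_v = 1 - (|L|-|R|)/(|L|+|R|)` for `v ∈ L`. -/
theorem stmt5 {V E : Type*} [Fintype V] [Fintype E] [DecidableEq V]
    (ends : E → V × V) (hne : ∀ e, (ends e).1 ≠ (ends e).2)
    (A : Matrix V E ℝ)
    (hA : ∀ i e, A i e = if i = (ends e).1 ∨ i = (ends e).2 then 1 else 0)
    (G : SimpleGraph V)
    (hG : ∀ u v, G.Adj u v ↔ u ≠ v ∧ ∃ e, ends e = (u, v) ∨ ends e = (v, u))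
    (L R : Finset V) (hdisj : Disjoint L R)
    -- `L ∪ R` is a connected component of `G`:
    (hconn : ∀ u ∈ L ∪ R, ∀ v ∈ L ∪ R, G.Reachable u v)
    (hclosed : ∀ u v, G.Adj u v → (u ∈ L ∪ R ↔ v ∈ L ∪ R))
    -- the component is bipartite with parts `L` and `R`:
    (hbipL : ∀ e, (ends e).1 ∈ L → (ends e).2 ∈ R)
    (hbipR : ∀ e, (ends e).1 ∈ R → (ends e).2 ∈ L)
    (hbipL' : ∀ e, (ends e).2 ∈ L → (ends e).1 ∈ R)
    (hbipR' : ∀ e, (ends e).2 ∈ R → (ends e).1 ∈ L)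
    (hsize : R.card ≤ L.card)
    (hedge : ∃ e, (ends e).1 ∈ L ∪ R)
    (w : E → ℝ)
    (hmin : ∀ w' : E → ℝ,
      ∑ i, (1 - A.mulVec w i) ^ 2 ≤ ∑ i, (1 - A.mulVec w' i) ^ 2) :
    (∀ u ∈ R, A.mulVec w u = 1 + ((L.card : ℝ) - R.card) / ((L.card : ℝ) + R.card)) ∧
    (∀ v ∈ L, A.mulVec w v = 1 - ((L.card : ℝ) - R.card) / ((L.card : ℝ) + R.card)) := by
  classical
  set α := A.mulVec w with hα
  -- column sums against an arbitrary function
  have hsum2 : ∀ (e : E) (f : V → ℝ), ∑ i, A i e * f i = f (ends e).1 + f (ends e).2 := by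
    intro e f
    have h1 : ∀ i, A i e * f i = (if i = (ends e).1 then f (ends e).1 else 0)
        + (if i = (ends e).2 then f (ends e).2 else 0) := by
      intro i
      have hne' := hne e
      rw [hA]
      by_cases h1 : i = (ends e).1
      · subst h1; simp [hne']
      · by_cases h2 : i = (ends e).2
        · subst h2; simp [h1]
        · simp [h1, h2]
    simp [h1, Finset.sum_add_distrib, Finset.sum_ite_eq']
  -- stationarity: the two endpoint values of each edge sum to 2
  have hstat : ∀ e, α (ends e).1 + α (ends e).2 = 2 := by
    intro e
    set c := (1 - α (ends e).1) + (1 - α (ends e).2) with hc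
    have key : c = 0 := by
      by_contra hc0
      have hmv : ∀ i, A.mulVec (fun f => w f + if f = e then c / 2 else 0) i
          = α i + (c / 2) * A i e := by
        intro i
        have : ∀ f, A i f * (w f + if f = e then c / 2 else 0)
            = A i f * w f + (if f = e then A i e * (c / 2) else 0) := by
          intro f
          by_cases hf : f = e <;> simp [hf, mul_add]
        simp only [Matrix.mulVec, dotProduct, this, Finset.sum_add_distrib,
          Finset.sum_ite_eq', Finset.mem_univ, if_true]
        rw [hα]
        simp [Matrix.mulVec, dotProduct]
        ring
      have hlt : ∑ i, (1 - A.mulVec (fun f => w f + if f = e then c / 2 else 0) i) ^ 2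
          < ∑ i, (1 - α i) ^ 2 := by
        have hexp : ∑ i, (1 - A.mulVec (fun f => w f + if f = e then c / 2 else 0) i) ^ 2
            = ∑ i, ((1 - α i) ^ 2 - c * (A i e * (1 - α i))
                + (c / 2) ^ 2 * (A i e * A i e)) := by
          refine Finset.sum_congr rfl fun i _ => ?_
          rw [hmv i]; ring
        have hA1 : ∑ i, A i e * (1 - α i) = c := by
          rw [hsum2 e (fun i => 1 - α i)]
        have hA2 : ∑ i, A i e * A i e = 2 := by
          rw [hsum2 e (fun i => A i e)]
          rw [hA, hA]
          simp
          norm_num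
        rw [hexp]
        rw [Finset.sum_add_distrib, Finset.sum_sub_distrib, ← Finset.mul_sum,
          ← Finset.mul_sum, hA1, hA2]
        have hpos : c * c > 0 := mul_self_pos.mpr hc0
        have hr : (c / 2) ^ 2 * 2 = c * c / 2 := by ring
        set S := ∑ i : V, (1 - α i) ^ 2 with hS
        clear_value S
        generalize c = d at *
        nlinarith [hpos, hr]
      exact absurd (hmin _) (not_le.mpr hlt)
    rw [hc] at key
    linarith
  -- adjacency version
  have hadj2 : ∀ u v, G.Adj u v → α u + α v = 2 := by
    intro u v huv
    obtain ⟨-, e, he | he⟩ := (hG u v).mp huv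
    · have := hstat e; rw [he] at this; exact this
    · have := hstat e; rw [he] at this; linarith
  -- sides alternate along edges
  have hside : ∀ u v, G.Adj u v → ((u ∈ L → v ∈ R) ∧ (u ∈ R → v ∈ L)) := by
    intro u v huv
    obtain ⟨-, e, he | he⟩ := (hG u v).mp huv
    · refine ⟨fun hu => ?_, fun hu => ?_⟩
      · have := hbipL e (by rw [he]; exact hu); rwa [he] at this
      · have := hbipR e (by rw [he]; exact hu); rwa [he] at this
    · refine ⟨fun hu => ?_, fun hu => ?_⟩
      · have := hbipL' e (by rw [he]; exact hu); rwa [he] at this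
      · have := hbipR' e (by rw [he]; exact hu); rwa [he] at this
  -- propagation along walks
  have hwalk : ∀ u v (p : G.Walk u v),
      (u ∈ L → (v ∈ L ∧ α u = α v) ∨ (v ∈ R ∧ α u + α v = 2)) ∧
      (u ∈ R → (v ∈ R ∧ α u = α v) ∨ (v ∈ L ∧ α u + α v = 2)) := by
    intro u v p
    induction p with
    | nil => exact ⟨fun h => Or.inl ⟨h, rfl⟩, fun h => Or.inl ⟨h, rfl⟩⟩
    | @cons u x v h p ih =>
      have hs := hside u x h
      have ha := hadj2 u x h
      constructor
      · intro hu
        have hx : x ∈ R := hs.1 hu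
        rcases ih.2 hx with ⟨hv, hxv⟩ | ⟨hv, hxv⟩
        · exact Or.inr ⟨hv, by linarith⟩
        · exact Or.inl ⟨hv, by linarith⟩
      · intro hu
        have hx : x ∈ L := hs.2 hu
        rcases ih.1 hx with ⟨hv, hxv⟩ | ⟨hv, hxv⟩
        · exact Or.inr ⟨hv, by linarith⟩
        · exact Or.inl ⟨hv, by linarith⟩
  -- find a vertex on each side
  obtain ⟨e₀, he₀⟩ := hedge
  obtain ⟨u₀, hu₀, v₀, hv₀⟩ : ∃ u₀, u₀ ∈ L ∧ ∃ v₀, v₀ ∈ R := by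
    rcases Finset.mem_union.mp he₀ with h | h
    · exact ⟨(ends e₀).1, h, (ends e₀).2, hbipL e₀ h⟩
    · exact ⟨(ends e₀).2, hbipR e₀ h, (ends e₀).1, h⟩
  have hdis : ∀ x, x ∈ L → x ∈ R → False := fun x hx hx' =>
    (Finset.disjoint_left.mp hdisj hx hx')
  -- α is constant on L and on R
  have haL : ∀ u ∈ L, α u = α u₀ := by
    intro u hu
    obtain ⟨p⟩ := hconn u₀ (Finset.mem_union_left _ hu₀) u (Finset.mem_union_left _ hu)
    rcases (hwalk u₀ u p).1 hu₀ with ⟨-, h⟩ | ⟨hv, -⟩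
    · exact h.symm
    · exact absurd hv (fun hv => hdis u hu hv)
  have haR : ∀ v ∈ R, α v = α v₀ := by
    intro v hv
    obtain ⟨p⟩ := hconn v₀ (Finset.mem_union_right _ hv₀) v (Finset.mem_union_right _ hv)
    rcases (hwalk v₀ v p).2 hv₀ with ⟨-, h⟩ | ⟨hv', -⟩
    · exact h.symm
    · exact absurd hv' (fun hv' => hdis v hv' hv)
  have hab : α u₀ + α v₀ = 2 := by
    obtain ⟨p⟩ := hconn u₀ (Finset.mem_union_left _ hu₀) v₀ (Finset.mem_union_right _ hv₀)
    rcases (hwalk u₀ v₀ p).1 hu₀ with ⟨hv, -⟩ | ⟨-, h⟩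
    · exact absurd hv (fun hv => hdis v₀ hv hv₀)
    · exact h
  -- column sums over L equal column sums over R
  have hcol : ∀ e, (∑ v ∈ L, A v e) = ∑ v ∈ R, A v e := by
    intro e
    have hgen : ∀ (S : Finset V), ∑ v ∈ S, A v e
        = (if (ends e).1 ∈ S then (1 : ℝ) else 0)
          + (if (ends e).2 ∈ S then (1 : ℝ) else 0) := by
      intro S
      have h1 : ∀ i, A i e = (if i = (ends e).1 then (1 : ℝ) else 0)
          + (if i = (ends e).2 then (1 : ℝ) else 0) := by
        intro i
        have hne' := hne e
        rw [hA]
        by_cases h1 : i = (ends e).1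
        · subst h1; simp [hne']
        · by_cases h2 : i = (ends e).2
          · subst h2; simp [h1]
          · simp [h1, h2]
      simp [h1, Finset.sum_add_distrib, Finset.sum_ite_eq']
    rw [hgen L, hgen R]
    by_cases h1 : (ends e).1 ∈ L
    · have h2 := hbipL e h1
      have h1' : (ends e).1 ∉ R := fun h => hdis _ h1 h
      have h2' : (ends e).2 ∉ L := fun h => hdis _ h h2
      simp [h1, h2, h1', h2']
    · by_cases h1r : (ends e).1 ∈ R
      · have h2 := hbipR e h1r
        have h2' : (ends e).2 ∉ R := fun h => hdis _ h2 h
        simp [h1, h1r, h2, h2']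
      · have h2 : (ends e).2 ∉ L := fun h => h1r (hbipL' e h)
        have h2' : (ends e).2 ∉ R := fun h => h1 (hbipR' e h)
        simp [h1, h1r, h2, h2']
  -- therefore the sums of α over L and R agree
  have hsumeq : ∑ v ∈ L, α v = ∑ v ∈ R, α v := by
    have hS : ∀ (S : Finset V), ∑ v ∈ S, α v = ∑ e, (∑ v ∈ S, A v e) * w e := by
      intro S
      simp only [hα, Matrix.mulVec, dotProduct]
      rw [Finset.sum_comm]
      simp [Finset.sum_mul]
    rw [hS L, hS R]
    exact Finset.sum_congr rfl fun e _ => by rw [hcol e]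
  have hsL : ∑ v ∈ L, α v = (L.card : ℝ) * α u₀ := by
    rw [Finset.sum_congr rfl haL, Finset.sum_const, nsmul_eq_mul]
  have hsR : ∑ v ∈ R, α v = (R.card : ℝ) * α v₀ := by
    rw [Finset.sum_congr rfl haR, Finset.sum_const, nsmul_eq_mul]
  have hbal : (L.card : ℝ) * α u₀ = (R.card : ℝ) * α v₀ := by
    rw [← hsL, ← hsR, hsumeq]
  have hLpos : (0 : ℝ) < L.card := by
    exact_mod_cast Finset.card_pos.mpr ⟨u₀, hu₀⟩
  have hRpos : (0 : ℝ) < R.card := by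
    exact_mod_cast Finset.card_pos.mpr ⟨v₀, hv₀⟩
  have hden : (L.card : ℝ) + R.card ≠ 0 := by positivity
  have hb : α v₀ = 1 + ((L.card : ℝ) - R.card) / ((L.card : ℝ) + R.card) := by
    field_simp
    nlinarith [hbal, hab]
  have ha : α u₀ = 1 - ((L.card : ℝ) - R.card) / ((L.card : ℝ) + R.card) := by
    field_simp
    nlinarith [hbal, hab]
  refine ⟨fun u hu => ?_, fun v hv => ?_⟩
  · rw [haR u hu]; exact hb
  · rw [haL v hv]; exact ha
end

section
/- Consider any assignment matrix A ∈ ℝ^{n×m} and any (possibly randomized) decoding scheme that, when each machine straggles independently with probability p, produces an α ∈ ℝ^n such that α_i = 0 whenever all machines holding block i straggle, and E[α] = 𝟙. If block i is held by d_i machines and Σ_i d_i ≤ dn, then (1/n)E[|α − 𝟙|₂²] ≥ p^d/(1 − p^d). -/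
open MeasureTheory ProbabilityTheory Finset

/-!
Both halves of the bound are tangent-line arguments. For one block, let `E` be the event that
all its machines straggle, of probability `q`. Since `α = 0` on `E` and `E[α - 1] = 0`,
integrating the affine minorant `2c(α - 1) - c²` of `(α - 1)²`, corrected to be exact on `E`,
gives `E[(α - 1)²] ≥ (1 + c)² q - c²`, which equals `q / (1 - q)` for `c = q / (1 - q)`.
Across blocks, `p^k ≥ p^d (1 + (k - d) log p)` and `t / (1 - t)` lies above its tangent line at
`t = p^d`; summing over blocks with `Σ kᵢ ≤ d n` and `log p ≤ 0` gives
`Σᵢ p^{kᵢ} / (1 - p^{kᵢ}) ≥ n p^d / (1 - p^d)`.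
-/

lemma pow_mul_one_add_sub_mul_log_le_pow {p : ℝ} (hp : 0 < p) (k d : ℕ) :
    p ^ d * (1 + ((k : ℝ) - d) * Real.log p) ≤ p ^ k := by
  have hexp (k : ℕ) : p ^ k = Real.exp (k * Real.log p) := by
    rw [Real.exp_nat_mul, Real.exp_log hp]
  calc p ^ d * (1 + ((k : ℝ) - d) * Real.log p)
      ≤ Real.exp (d * Real.log p) * Real.exp (((k : ℝ) - d) * Real.log p) := by
        rw [hexp d]
        gcongr
        linarith [Real.add_one_le_exp (((k : ℝ) - d) * Real.log p)]
    _ = p ^ k := by rw [← Real.exp_add, hexp k]; ring_nf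

lemma div_one_sub_add_le_div_one_sub {s t : ℝ} (hs : s ≤ 1) (ht₀ : 0 ≤ t) (ht₁ : t < 1) :
    s / (1 - s) + (t - s) / (1 - s) ^ 2 ≤ t / (1 - t) := by
  rcases hs.eq_or_lt with rfl | hs
  · simp only [sub_self, div_zero, ne_eq, OfNat.ofNat_ne_zero, not_false_eq_true, zero_pow,
      add_zero]
    exact div_nonneg ht₀ (by linarith)
  have hgap : t / (1 - t) - (s / (1 - s) + (t - s) / (1 - s) ^ 2)
      = (t - s) ^ 2 / ((1 - t) * (1 - s) ^ 2) := by
    field_simp [(by linarith : 1 - t ≠ 0), (by linarith : 1 - s ≠ 0)]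
    ring
  have : 0 ≤ (t - s) ^ 2 / ((1 - t) * (1 - s) ^ 2) :=
    div_nonneg (sq_nonneg _) (mul_nonneg (by linarith) (sq_nonneg _))
  linarith

section SumBound

variable {ι : Type*} [Fintype ι] {p : ℝ} {d : ℕ} {k : ι → ℕ}

lemma card_mul_pow_le_sum_pow (hp₀ : 0 < p) (hp₁ : p ≤ 1)
    (hload : ∑ i, k i ≤ d * Fintype.card ι) :
    Fintype.card ι * p ^ d ≤ ∑ i, p ^ k i := by
  have hload' : (∑ i, (k i : ℝ)) - d * Fintype.card ι ≤ 0 := by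
    rw [sub_nonpos]; exact_mod_cast hload
  have hlog : Real.log p ≤ 0 := Real.log_nonpos hp₀.le hp₁
  calc (Fintype.card ι : ℝ) * p ^ d
      ≤ p ^ d * (Fintype.card ι + ((∑ i, (k i : ℝ)) - d * Fintype.card ι) * Real.log p) := by
        nlinarith [pow_pos hp₀ d, mul_nonneg_of_nonpos_of_nonpos hload' hlog]
    _ = ∑ i, p ^ d * (1 + ((k i : ℝ) - d) * Real.log p) := by
        rw [← mul_sum, sum_add_distrib, ← sum_mul, sum_sub_distrib]
        simp only [sum_const, card_univ, nsmul_eq_mul, mul_one]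
        ring
    _ ≤ ∑ i, p ^ k i := sum_le_sum fun i _ => pow_mul_one_add_sub_mul_log_le_pow hp₀ (k i) d

lemma card_mul_pow_div_one_sub_pow_le_sum (hp₀ : 0 < p) (hp₁ : p < 1) (hk : ∀ i, k i ≠ 0)
    (hload : ∑ i, k i ≤ d * Fintype.card ι) :
    Fintype.card ι * (p ^ d / (1 - p ^ d)) ≤ ∑ i, p ^ k i / (1 - p ^ k i) := by
  have hmass : 0 ≤ ((∑ i, p ^ k i) - Fintype.card ι * p ^ d) / (1 - p ^ d) ^ 2 :=
    div_nonneg (by linarith [card_mul_pow_le_sum_pow hp₀ hp₁.le hload]) (sq_nonneg _)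
  calc (Fintype.card ι : ℝ) * (p ^ d / (1 - p ^ d))
      ≤ ∑ i, (p ^ d / (1 - p ^ d) + (p ^ k i - p ^ d) / (1 - p ^ d) ^ 2) := by
        rw [sum_add_distrib, sum_const, card_univ, nsmul_eq_mul, ← sum_div, sum_sub_distrib,
          sum_const, card_univ, nsmul_eq_mul]
        linarith
    _ ≤ ∑ i, p ^ k i / (1 - p ^ k i) := sum_le_sum fun i _ =>
        div_one_sub_add_le_div_one_sub (pow_le_one₀ hp₀.le hp₁.le) (pow_nonneg hp₀.le _)
          (pow_lt_one₀ hp₀.le hp₁ (hk i))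

end SumBound

section CoordinateBound

variable {Ω : Type*} [MeasurableSpace Ω] {μ : Measure Ω}

lemma ofReal_integral_le_lintegral_ofReal_of_le {f g : Ω → ℝ} (hg : Integrable g μ)
    (hgf : g ≤ᵐ[μ] f) :
    ENNReal.ofReal (∫ ω, g ω ∂μ) ≤ ∫⁻ ω, ENNReal.ofReal (f ω) ∂μ :=
  calc ENNReal.ofReal (∫ ω, g ω ∂μ)
      ≤ ENNReal.ofReal (∫⁻ ω, ENNReal.ofReal (g ω) ∂μ).toReal := by
        rw [integral_eq_lintegral_pos_part_sub_lintegral_neg_part hg]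
        exact ENNReal.ofReal_le_ofReal (sub_le_self _ ENNReal.toReal_nonneg)
    _ ≤ ∫⁻ ω, ENNReal.ofReal (g ω) ∂μ := ENNReal.ofReal_toReal_le
    _ ≤ ∫⁻ ω, ENNReal.ofReal (f ω) ∂μ :=
        lintegral_mono_ae (hgf.mono fun _ h => ENNReal.ofReal_le_ofReal h)

lemma ofReal_div_one_sub_le_lintegral_sq_sub_one [IsProbabilityMeasure μ] {E : Set Ω}
    (hE : MeasurableSet E) {X : Ω → ℝ} (hX : Integrable X μ) (hXE : ∀ ω ∈ E, X ω = 0)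
    (hX₁ : ∫ ω, X ω ∂μ = 1) :
    ENNReal.ofReal (μ.real E / (1 - μ.real E))
      ≤ ∫⁻ ω, ENNReal.ofReal ((X ω - 1) ^ 2) ∂μ := by
  set q := μ.real E
  rcases eq_or_ne q 1 with hq | hq
  · simp [hq]
  set c := q / (1 - q)
  have hX_sub : Integrable (fun ω => X ω - 1) μ := hX.sub (integrable_const 1)
  have hmean : ∫ ω, (X ω - 1) ∂μ = 0 := by
    rw [integral_sub hX (integrable_const 1), hX₁]; simp
  have haff : Integrable (fun ω => 2 * c * (X ω - 1) - c ^ 2) μ :=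
    (hX_sub.const_mul _).sub (integrable_const _)
  have hind : Integrable (E.indicator fun _ => (1 + c) ^ 2) μ := (integrable_const _).indicator hE
  have hminorant (ω : Ω) :
      2 * c * (X ω - 1) - c ^ 2 + E.indicator (fun _ => (1 + c) ^ 2) ω ≤ (X ω - 1) ^ 2 := by
    by_cases hω : ω ∈ E
    · simp only [hω, hXE ω hω, Set.indicator_of_mem]
      exact le_of_eq (by ring)
    · simp only [hω, not_false_eq_true, Set.indicator_of_notMem, add_zero]
      nlinarith [sq_nonneg (X ω - 1 - c)]
  have hminorant_int :
      ∫ ω, (2 * c * (X ω - 1) - c ^ 2 + E.indicator (fun _ => (1 + c) ^ 2) ω) ∂μ = c := by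
    rw [integral_add haff hind, integral_sub (hX_sub.const_mul _) (integrable_const _),
      integral_const_mul, hmean, integral_indicator_const _ hE]
    simp only [integral_const, probReal_univ, smul_eq_mul, c]
    field_simp [sub_ne_zero.2 hq.symm]
    ring
  rw [← hminorant_int]
  exact ofReal_integral_le_lintegral_ofReal_of_le (haff.add hind)
    (Filter.Eventually.of_forall hminorant)

end CoordinateBound

lemma measureReal_biInter_preimage_true {Ω ι : Type*} [MeasurableSpace Ω] {μ : Measure Ω}
    {B : ι → Ω → Bool} (hindep : iIndepFun B μ) {p : ℝ} (hp : 0 ≤ p)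
    (hBp : ∀ j, μ (B j ⁻¹' {true}) = ENNReal.ofReal p) (s : Finset ι) :
    μ.real (⋂ j ∈ s, B j ⁻¹' {true}) = p ^ s.card := by
  rw [measureReal_def, hindep.measure_inter_preimage_eq_mul s (sets := fun _ => {true})
    fun _ _ => measurableSet_singleton true, prod_congr rfl fun j _ => hBp j, prod_const,
    ← ENNReal.ofReal_pow hp, ENNReal.toReal_ofReal (by positivity)]

theorem stmt10_general {Ω : Type*} [MeasurableSpace Ω] (μ : Measure Ω) [IsProbabilityMeasure μ]
    (n m d : ℕ) (hn : 0 < n)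
    (p : ℝ) (hp0 : 0 < p) (hp1 : p < 1)
    (B : Fin m → Ω → Bool) (hBmeas : ∀ j, Measurable (B j))
    (hindep : iIndepFun B μ)
    (hBp : ∀ j, μ (B j ⁻¹' {true}) = ENNReal.ofReal p)
    (holds : Fin n → Finset (Fin m))
    (hload : ∑ i, (holds i).card ≤ d * n)
    (α : Ω → Fin n → ℝ)
    (hzero : ∀ ω i, (∀ j ∈ holds i, B j ω = true) → α ω i = 0)
    (hint : ∀ i, Integrable (fun ω => α ω i) μ)
    (hunbiased : ∀ i, ∫ ω, α ω i ∂μ = 1) :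
    ENNReal.ofReal (p ^ d / (1 - p ^ d))
      ≤ (∑ i, ∫⁻ ω, ENNReal.ofReal ((α ω i - 1) ^ 2) ∂μ) / n := by
  set E : Fin n → Set Ω := fun i => ⋂ j ∈ holds i, B j ⁻¹' {true}
  have hE_meas (i : Fin n) : MeasurableSet (E i) :=
    .biInter (holds i).countable_toSet fun j _ => hBmeas j (measurableSet_singleton true)
  have hE_prob (i : Fin n) : μ.real (E i) = p ^ (holds i).card :=
    measureReal_biInter_preimage_true hindep hp0.le hBp (holds i)
  have hcard (i : Fin n) : (holds i).card ≠ 0 := by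
    intro h
    have : ∫ ω, α ω i ∂μ = 0 := by simp [hzero _ i (by simp [card_eq_zero.1 h])]
    simp [hunbiased i] at this
  have hcoord (i : Fin n) := ofReal_div_one_sub_le_lintegral_sq_sub_one (hE_meas i) (hint i)
    (fun ω hω => hzero ω i (by simpa [E] using hω)) (hunbiased i)
  have hsum := card_mul_pow_div_one_sub_pow_le_sum hp0 hp1 hcard (by simpa using hload)
  rw [Fintype.card_fin] at hsum
  rw [ENNReal.le_div_iff_mul_le (by simp [hn.ne']) (by simp), mul_comm,
    ← ENNReal.ofReal_natCast, ← ENNReal.ofReal_mul (by positivity)]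
  calc ENNReal.ofReal (n * (p ^ d / (1 - p ^ d)))
      ≤ ENNReal.ofReal (∑ i, p ^ (holds i).card / (1 - p ^ (holds i).card)) :=
        ENNReal.ofReal_le_ofReal hsum
    _ = ∑ i, ENNReal.ofReal (p ^ (holds i).card / (1 - p ^ (holds i).card)) :=
        ENNReal.ofReal_sum_of_nonneg fun i _ => div_nonneg (pow_nonneg hp0.le _)
          (sub_nonneg.2 (pow_le_one₀ hp0.le hp1.le))
    _ ≤ ∑ i, ∫⁻ ω, ENNReal.ofReal ((α ω i - 1) ^ 2) ∂μ :=
        sum_le_sum fun i _ => hE_prob i ▸ hcoord i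

/-- For any assignment of `n` data blocks to `m` machines (block `i` held
by the `dᵢ` machines in `holds i`, with `Σᵢ dᵢ ≤ d n`), and any decoding scheme producing
`α` with `αᵢ = 0` whenever all machines holding block `i` straggle and `E[α] = 𝟙` under
i.i.d. Bernoulli(p) stragglers, we have `(1/n) E[|α - 𝟙|₂²] ≥ p^d/(1 - p^d)`. -/
theorem stmt10 {Ω : Type*} [MeasurableSpace Ω] (μ : Measure Ω) [IsProbabilityMeasure μ]
    (n m d : ℕ) (hn : 0 < n) (hd : 0 < d)
    (p : ℝ) (hp0 : 0 < p) (hp1 : p < 1)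
    (B : Fin m → Ω → Bool) (hBmeas : ∀ j, Measurable (B j))
    (hindep : iIndepFun B μ)
    (hBp : ∀ j, μ (B j ⁻¹' {true}) = ENNReal.ofReal p)
    (holds : Fin n → Finset (Fin m))
    (hload : ∑ i, (holds i).card ≤ d * n)
    (α : Ω → Fin n → ℝ) (hαmeas : Measurable α)
    (hzero : ∀ ω i, (∀ j ∈ holds i, B j ω = true) → α ω i = 0)
    (hint : ∀ i, Integrable (fun ω => α ω i) μ)
    (hunbiased : ∀ i, ∫ ω, α ω i ∂μ = 1) :
    ENNReal.ofReal (p ^ d / (1 - p ^ d))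
      ≤ (∑ i, ∫⁻ ω, ENNReal.ofReal ((α ω i - 1) ^ 2) ∂μ) / n :=
  stmt10_general μ n m d hn p hp0 hp1 B hBmeas hindep hBp holds hload α hzero hint hunbiased
end

section
/- Consider any assignment scheme A ∈ ℝ^{n×m} with at most dn nonzero entries, and a fixed-coefficient decoding scheme w_j = ŵ_j·B_j with B_j i.i.d. Bernoulli(1−p), that is unbiased: E[Aw] = 𝟙. Then (1/n)·E[|Aw − 𝟙|₂²] ≥ p/(d(1−p)). -/
open MeasureTheory ProbabilityTheory Finset Matrix

/-!
Write `c i j = A i j * ŵ j`, so that `(A w)_i = ∑ j, c i j * B j`. Unbiasedness forces every row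
of `c` to sum to `1 / (1 - p)`, and by independence the `i`-th coordinate has variance
`p (1 - p) ∑ j, c i j ^ 2`. Summing over the rows, the error is `p (1 - p) ‖c‖_F²`, while
Cauchy–Schwarz over the at most `d n` nonzero entries of `c` gives
`(n / (1 - p))² ≤ d n ‖c‖_F²`.
-/

theorem sq_sum_le_card_mul_sum_sq_of_support_subset {α : Type*} [Fintype α] {f : α → ℝ}
    {s : Finset α} (hf : ∀ x ∉ s, f x = 0) :
    (∑ x, f x) ^ 2 ≤ #s * ∑ x, f x ^ 2 := by
  have hsum : ∑ x ∈ s, f x = ∑ x, f x :=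
    sum_subset (subset_univ s) fun x _ hx => hf x hx
  have hsum_sq : ∑ x ∈ s, f x ^ 2 = ∑ x, f x ^ 2 :=
    sum_subset (subset_univ s) fun x _ hx => by simp [hf x hx]
  rw [← hsum, ← hsum_sq]
  exact sq_sum_le_card_mul_sum_sq

theorem card_mul_sq_le_card_mul_sum_sq_of_row_sum {ι κ : Type*} [Fintype ι] [Fintype κ]
    {c : ι → κ → ℝ} {s : ℝ} (hrow : ∀ i, ∑ j, c i j = s) {T : Finset (ι × κ)}
    (hT : ∀ q ∉ T, c q.1 q.2 = 0) :
    (Fintype.card ι * s) ^ 2 ≤ #T * ∑ i, ∑ j, c i j ^ 2 := by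
  have h := sq_sum_le_card_mul_sum_sq_of_support_subset hT
  simpa only [Fintype.sum_prod_type, hrow, sum_const, card_univ, nsmul_eq_mul] using h

section ZeroOne

variable {Ω : Type*} [MeasurableSpace Ω] {μ : Measure Ω} {X : Ω → ℝ}

lemma integral_eq_measureReal_of_zero_or_one (hX : Measurable X)
    (h01 : ∀ ω, X ω = 0 ∨ X ω = 1) :
    ∫ ω, X ω ∂μ = μ.real (X ⁻¹' {1}) := by
  have hX_eq : X = (X ⁻¹' {1}).indicator 1 := by
    funext ω
    rcases h01 ω with h | h <;> simp [h]
  conv_lhs => rw [hX_eq]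
  exact integral_indicator_one (hX (measurableSet_singleton 1))

lemma memLp_of_zero_or_one [IsFiniteMeasure μ] (hX : Measurable X)
    (h01 : ∀ ω, X ω = 0 ∨ X ω = 1) (q : ENNReal) : MemLp X q μ :=
  memLp_of_bounded (a := 0) (b := 1)
    (Filter.Eventually.of_forall fun ω => by rcases h01 ω with h | h <;> simp [h])
    hX.aestronglyMeasurable q

lemma variance_eq_of_zero_or_one [IsProbabilityMeasure μ] (hX : Measurable X)
    (h01 : ∀ ω, X ω = 0 ∨ X ω = 1) :
    Var[X; μ] = μ.real (X ⁻¹' {1}) * (1 - μ.real (X ⁻¹' {1})) := by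
  have hsq : X ^ 2 = X := by
    funext ω
    rcases h01 ω with h | h <;> simp [h]
  rw [variance_eq_sub (memLp_of_zero_or_one hX h01 2), hsq,
    integral_eq_measureReal_of_zero_or_one hX h01]
  ring

end ZeroOne

section LinearCombination

variable {Ω ι : Type*} [MeasurableSpace Ω] {μ : Measure Ω} [Fintype ι] {X : ι → Ω → ℝ}

lemma integral_sum_mul (hX : ∀ i, Integrable (X i) μ) (c : ι → ℝ) :
    ∫ ω, ∑ i, c i * X i ω ∂μ = ∑ i, c i * ∫ ω, X i ω ∂μ := by
  rw [integral_finsetSum _ fun i _ => (hX i).const_mul (c i)]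
  simp_rw [integral_const_mul]

lemma memLp_sum_mul {q : ENNReal} (hX : ∀ i, MemLp (X i) q μ) (c : ι → ℝ) :
    MemLp (fun ω => ∑ i, c i * X i ω) q μ :=
  memLp_finsetSum _ fun i _ => (hX i).const_mul (c i)

lemma variance_sum_mul_of_iIndepFun (hX : ∀ i, MemLp (X i) 2 μ) (hind : iIndepFun X μ)
    (c : ι → ℝ) :
    Var[fun ω => ∑ i, c i * X i ω; μ] = ∑ i, c i ^ 2 * Var[X i; μ] := by
  have hsum : (fun ω => ∑ i, c i * X i ω) = ∑ i, c i • X i := by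
    funext ω
    simp
  rw [hsum, IndepFun.variance_sum (fun i _ => (hX i).const_smul (c i))
    fun i _ j _ hij => (hind.indepFun hij).comp (measurable_const_mul (c i))
      (measurable_const_mul (c j))]
  simp_rw [variance_smul]

end LinearCombination

section Bernoulli

variable {Ω ι : Type*} [MeasurableSpace Ω] {μ : Measure Ω} [IsProbabilityMeasure μ]
  [Fintype ι] {B : ι → Ω → ℝ} {r : ℝ}

lemma integral_sum_mul_bernoulli (hB : ∀ i, Measurable (B i))
    (h01 : ∀ i ω, B i ω = 0 ∨ B i ω = 1) (hr : ∀ i, μ.real (B i ⁻¹' {1}) = r) (c : ι → ℝ) :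
    ∫ ω, ∑ i, c i * B i ω ∂μ = r * ∑ i, c i := by
  rw [integral_sum_mul (fun i => (memLp_of_zero_or_one (hB i) (h01 i) 1).integrable le_rfl),
    mul_sum]
  simp_rw [integral_eq_measureReal_of_zero_or_one (hB _) (h01 _), hr, mul_comm]

lemma variance_sum_mul_bernoulli (hB : ∀ i, Measurable (B i)) (hind : iIndepFun B μ)
    (h01 : ∀ i ω, B i ω = 0 ∨ B i ω = 1) (hr : ∀ i, μ.real (B i ⁻¹' {1}) = r) (c : ι → ℝ) :
    Var[fun ω => ∑ i, c i * B i ω; μ] = r * (1 - r) * ∑ i, c i ^ 2 := by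
  rw [variance_sum_mul_of_iIndepFun (fun i => memLp_of_zero_or_one (hB i) (h01 i) 2) hind,
    mul_sum]
  simp_rw [variance_eq_of_zero_or_one (hB _) (h01 _), hr, mul_comm]

lemma integral_sq_sub_one_sum_mul_bernoulli (hB : ∀ i, Measurable (B i))
    (hind : iIndepFun B μ) (h01 : ∀ i ω, B i ω = 0 ∨ B i ω = 1)
    (hr : ∀ i, μ.real (B i ⁻¹' {1}) = r) {c : ι → ℝ}
    (hunbiased : ∫ ω, ∑ i, c i * B i ω ∂μ = 1) :
    ∫ ω, (∑ i, c i * B i ω - 1) ^ 2 ∂μ = r * (1 - r) * ∑ i, c i ^ 2 := by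
  have hL2 := memLp_sum_mul (fun i => memLp_of_zero_or_one (μ := μ) (hB i) (h01 i) 2) c
  rw [← variance_sum_mul_bernoulli hB hind h01 hr, variance_eq_integral hL2.aemeasurable,
    hunbiased]

lemma integral_sum_sq_sub_one_sum_mul_bernoulli {κ : Type*} [Fintype κ]
    (hB : ∀ i, Measurable (B i)) (hind : iIndepFun B μ) (h01 : ∀ i ω, B i ω = 0 ∨ B i ω = 1)
    (hr : ∀ i, μ.real (B i ⁻¹' {1}) = r) {c : κ → ι → ℝ}
    (hunbiased : ∀ k, ∫ ω, ∑ i, c k i * B i ω ∂μ = 1) :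
    ∫ ω, ∑ k, (∑ i, c k i * B i ω - 1) ^ 2 ∂μ = r * (1 - r) * ∑ k, ∑ i, c k i ^ 2 := by
  have hint : ∀ k, Integrable (fun ω => (∑ i, c k i * B i ω - 1) ^ 2) μ := fun k =>
    ((memLp_sum_mul (fun i => memLp_of_zero_or_one (hB i) (h01 i) 2) (c k)).sub
      (memLp_const 1)).integrable_sq
  rw [integral_finsetSum _ fun k _ => hint k, mul_sum]
  simp_rw [integral_sq_sub_one_sum_mul_bernoulli hB hind h01 hr (hunbiased _)]

end Bernoulli

/-- For any assignment matrix `A` with at most `d n` nonzero entries and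
any fixed-coefficient decoding `w_j = ŵ_j B_j` (with `B_j` i.i.d. Bernoulli(1-p)) that is
unbiased, `E[A w] = 𝟙`, we have `(1/n) E[|A w - 𝟙|₂²] ≥ p/(d(1 - p))`. -/
theorem stmt13 {Ω : Type*} [MeasurableSpace Ω] (μ : Measure Ω) [IsProbabilityMeasure μ]
    (n m d : ℕ) (hn : 0 < n) (hd : 0 < d)
    (p : ℝ) (hp0 : 0 < p) (hp1 : p < 1)
    (A : Matrix (Fin n) (Fin m) ℝ)
    (hnnz : ((univ : Finset (Fin n × Fin m)).filter fun q => A q.1 q.2 ≠ 0).card ≤ d * n)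
    (what : Fin m → ℝ)
    (B : Fin m → Ω → ℝ) (hBmeas : ∀ j, Measurable (B j))
    (hindep : iIndepFun B μ)
    (hB01 : ∀ j ω, B j ω = 0 ∨ B j ω = 1)
    (hBp : ∀ j, μ (B j ⁻¹' {1}) = ENNReal.ofReal (1 - p))
    (α : Ω → Fin n → ℝ)
    (hα : ∀ ω, α ω = A.mulVec fun j => what j * B j ω)
    (hunbiased : ∀ i, ∫ ω, α ω i ∂μ = 1) :
    p / (d * (1 - p)) ≤ (1 / n : ℝ) * ∫ ω, ∑ i, (α ω i - 1) ^ 2 ∂μ := by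
  have hq : 0 < 1 - p := by linarith
  have hBreal : ∀ j, μ.real (B j ⁻¹' {1}) = 1 - p := fun j => by
    rw [measureReal_def, hBp j, ENNReal.toReal_ofReal hq.le]
  set c : Fin n → Fin m → ℝ := fun i j => A i j * what j
  obtain rfl : α = fun ω i => ∑ j, c i j * B j ω := by
    funext ω i
    simp [hα, mulVec, dotProduct, c, mul_assoc]
  have hrow : ∀ i, ∑ j, c i j = 1 / (1 - p) := fun i => by
    have h := hunbiased i
    rw [integral_sum_mul_bernoulli hBmeas hB01 hBreal] at h
    field_simp
    linarith
  have hentries := card_mul_sq_le_card_mul_sum_sq_of_row_sum hrow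
    (T := {q : Fin n × Fin m | A q.1 q.2 ≠ 0}) fun q hqT => by simp_all [c]
  have hfrob : ((n : ℝ) * (1 / (1 - p))) ^ 2 ≤ d * n * ∑ i, ∑ j, c i j ^ 2 := by
    simpa only [Fintype.card_fin] using hentries.trans (by gcongr; exact_mod_cast hnnz)
  rw [integral_sum_sq_sub_one_sum_mul_bernoulli hBmeas hindep hB01 hBreal hunbiased]
  have hn' : (0 : ℝ) < n := by exact_mod_cast hn
  have hd' : (0 : ℝ) < d := by exact_mod_cast hd
  rw [div_le_iff₀ (by positivity)]
  field_simp at hfrob ⊢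
  simpa only [sub_sub_cancel] using mul_le_mul_of_nonneg_right hfrob hp0.le
end

section
/- Let G ∈ ℝ^{d×n} be a matrix with G𝟙 = 0, and let σ² = Tr(GᵀG). Let β be a random vector in ℝ^n with E[β] = 𝟙 and r := (1/n)E[|β − 𝟙|₂²], and let ρ be an independent uniformly random permutation of coordinates. Then E[|G·ρ^{-1}(β)|₂²] ≤ r(1 + 1/(n−1))·σ². -/
/-!
Since `G 𝟙 = 0`, replacing `β` by `γ = β - 𝟙` does not change `G ρ⁻¹(β)`. Averaged over all
permutations, the second-moment matrix `C = E[γ γᵀ]` becomes `a I + b (𝟙𝟙ᵀ - I)`, where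
`n a = Tr C` and `n (n - 1) b = 𝟙ᵀ C 𝟙 - Tr C` by double transitivity of the symmetric group.
Hence `E|G ρ⁻¹(γ)|² = (a - b) Tr(GᵀG)`, and `Tr C = n r`, `𝟙ᵀ C 𝟙 = E[(𝟙ᵀ γ)²] ≥ 0` give
`a - b ≤ n r / (n - 1)`.
-/

open MeasureTheory Finset Matrix

theorem sum_sum_mul_mul_ite_of_sum_eq_zero {α : Type*} [Fintype α] [DecidableEq α] {g : α → ℝ}
    (hg : ∑ i, g i = 0) (A B : ℝ) :
    ∑ i, ∑ j, g i * g j * (if i = j then A else B) = (A - B) * ∑ i, g i ^ 2 := by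
  have h : ∀ i j, g i * g j * (if i = j then A else B)
      = g i * B * g j + if i = j then (A - B) * g i ^ 2 else 0 := by
    intro i j
    split_ifs with hij
    · subst hij; ring
    · ring
  simp [h, sum_add_distrib, ← mul_sum, hg]

namespace Equiv.Perm

variable {α : Type*} [DecidableEq α]

theorem exists_apply_eq_and_apply_eq {i j i' j' : α} (h : i ≠ j) (h' : i' ≠ j') :
    ∃ τ : Perm α, τ i = i' ∧ τ j = j' := by
  refine ⟨swap (swap i i' j) j' * swap i i', ?_, ?_⟩
  · simp only [mul_apply, swap_apply_left]
    refine swap_apply_of_ne_of_ne (fun hc => h ?_) h'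
    exact (swap i i').injective (by rw [swap_apply_left]; exact hc)
  · simp only [mul_apply, swap_apply_left]

variable [Fintype α]

theorem sum_apply_apply_comp_right (C : α → α → ℝ) (τ : Perm α) (i j : α) :
    ∑ σ : Perm α, C (σ (τ i)) (σ (τ j)) = ∑ σ : Perm α, C (σ i) (σ j) :=
  Equiv.sum_comp (Equiv.mulRight τ) fun σ => C (σ i) (σ j)

theorem sum_sum_apply (f : α → ℝ) :
    ∑ σ : Perm α, ∑ i, f (σ i) = (Fintype.card α).factorial * ∑ p, f p := by
  simp only [fun σ : Perm α => Equiv.sum_comp σ f, sum_const, card_univ, Fintype.card_perm,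
    nsmul_eq_mul]

theorem sum_sum_sum_apply (C : α → α → ℝ) :
    ∑ σ : Perm α, ∑ i, ∑ j, C (σ i) (σ j) = (Fintype.card α).factorial * ∑ p, ∑ q, C p q := by
  simp only [fun (σ : Perm α) i => Equiv.sum_comp σ (C (σ i))]
  exact sum_sum_apply fun p => ∑ q, C p q

theorem card_mul_sum_apply_self (C : α → α → ℝ) (i : α) :
    Fintype.card α * ∑ σ : Perm α, C (σ i) (σ i) = (Fintype.card α).factorial * ∑ p, C p p := by
  calc Fintype.card α * ∑ σ : Perm α, C (σ i) (σ i)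
      = ∑ i', ∑ σ : Perm α, C (σ i') (σ i') := by
        have h : ∀ i' ∈ univ, ∑ σ : Perm α, C (σ i') (σ i') = ∑ σ : Perm α, C (σ i) (σ i) :=
          fun i' _ => by simpa using (sum_apply_apply_comp_right C (swap i' i) i' i').symm
        rw [sum_eq_card_nsmul h, card_univ, nsmul_eq_mul]
    _ = (Fintype.card α).factorial * ∑ p, C p p := by
        rw [sum_comm, sum_sum_apply fun p => C p p]

theorem card_mul_pred_mul_sum_apply_of_ne (C : α → α → ℝ) {i j : α} (hij : i ≠ j) :
    Fintype.card α * (Fintype.card α - 1) * ∑ σ : Perm α, C (σ i) (σ j)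
      = (Fintype.card α).factorial * (∑ p, ∑ q, C p q - ∑ p, C p p) := by
  calc Fintype.card α * (Fintype.card α - 1) * ∑ σ : Perm α, C (σ i) (σ j)
      = ∑ i', ∑ j' ∈ univ.erase i', ∑ σ : Perm α, C (σ i') (σ j') := by
        have h : ∀ i', ∀ j' ∈ univ.erase i',
            ∑ σ : Perm α, C (σ i') (σ j') = ∑ σ : Perm α, C (σ i) (σ j) := by
          intro i' j' hj'
          obtain ⟨τ, rfl, rfl⟩ := exists_apply_eq_and_apply_eq (ne_of_mem_erase hj').symm hij
          exact (sum_apply_apply_comp_right C τ i' j').symm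
        simp only [sum_eq_card_nsmul (h _), card_erase_of_mem (mem_univ _), sum_const, card_univ,
          nsmul_eq_mul, Nat.cast_pred (Fintype.card_pos_iff.2 ⟨i⟩)]
        ring
    _ = ∑ σ : Perm α, ∑ i', ∑ j', C (σ i') (σ j') - ∑ σ : Perm α, ∑ i', C (σ i') (σ i') := by
        simp only [sum_erase_eq_sub (mem_univ _), sum_sub_distrib]
        simp only [sum_comm (s := univ (α := α)) (t := univ (α := Perm α))]
    _ = (Fintype.card α).factorial * (∑ p, ∑ q, C p q - ∑ p, C p p) := by
        rw [sum_sum_apply fun p => C p p, sum_sum_sum_apply, mul_sub]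

theorem card_mul_pred_mul_sum_apply (C : α → α → ℝ) (i j : α) :
    Fintype.card α * (Fintype.card α - 1) * ∑ σ : Perm α, C (σ i) (σ j)
      = (Fintype.card α).factorial *
          if i = j then (Fintype.card α - 1) * ∑ p, C p p else ∑ p, ∑ q, C p q - ∑ p, C p p := by
  split_ifs with hij
  · subst hij
    rw [mul_comm _ ((Fintype.card α : ℝ) - 1), mul_assoc, card_mul_sum_apply_self]
    ring
  · exact card_mul_pred_mul_sum_apply_of_ne C hij

theorem card_mul_pred_mul_sum_quadratic {g : α → ℝ} (hg : ∑ i, g i = 0) (C : α → α → ℝ) :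
    Fintype.card α * (Fintype.card α - 1) * ∑ σ : Perm α, ∑ i, ∑ j, g i * g j * C (σ i) (σ j)
      = (Fintype.card α).factorial * (Fintype.card α * ∑ p, C p p - ∑ p, ∑ q, C p q) *
          ∑ i, g i ^ 2 := by
  calc (Fintype.card α : ℝ) * (Fintype.card α - 1) *
        ∑ σ : Perm α, ∑ i, ∑ j, g i * g j * C (σ i) (σ j)
      = ∑ i, ∑ j, g i * g j *
          ((Fintype.card α : ℝ) * (Fintype.card α - 1) * ∑ σ : Perm α, C (σ i) (σ j)) := by
        simp only [mul_sum, sum_comm (s := univ (α := Perm α))]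
        exact sum_congr rfl fun i _ => sum_congr rfl fun j _ => sum_congr rfl fun σ _ => by ring
    _ = (Fintype.card α).factorial * ∑ i, ∑ j, g i * g j *
          (if i = j then (Fintype.card α - 1) * ∑ p, C p p
            else ∑ p, ∑ q, C p q - ∑ p, C p p) := by
        simp only [card_mul_pred_mul_sum_apply C, mul_sum (univ : Finset α)]
        exact sum_congr rfl fun i _ => sum_congr rfl fun j _ => by ring
    _ = (Fintype.card α).factorial * (Fintype.card α * ∑ p, C p p - ∑ p, ∑ q, C p q) *
          ∑ i, g i ^ 2 := by
        rw [sum_sum_mul_mul_ite_of_sum_eq_zero hg]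
        ring

end Equiv.Perm

section SecondMoments

variable {Ω α : Type*} [MeasurableSpace Ω] {μ : Measure Ω} [Fintype α] {w : Ω → α → ℝ}

theorem integral_sum_mulVec_sq {κ : Type*} [Fintype κ] (G : Matrix κ α ℝ)
    (hw : ∀ i j, Integrable (fun ω => w ω i * w ω j) μ) :
    ∫ ω, ∑ k, (G *ᵥ w ω) k ^ 2 ∂μ = ∑ k, ∑ i, ∑ j, G k i * G k j * ∫ ω, w ω i * w ω j ∂μ := by
  have hexpand : ∀ ω, ∑ k, (G *ᵥ w ω) k ^ 2
      = ∑ k, ∑ i, ∑ j, G k i * G k j * (w ω i * w ω j) := fun ω => by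
    simp only [mulVec, dotProduct, sq, sum_mul_sum]
    exact sum_congr rfl fun k _ => sum_congr rfl fun i _ => sum_congr rfl fun j _ => by ring
  have hint : ∀ k i j, Integrable (fun ω => G k i * G k j * (w ω i * w ω j)) μ :=
    fun k i j => (hw i j).const_mul _
  simp only [hexpand]
  rw [integral_finsetSum _ fun k _ => integrable_finsetSum _ fun i _ =>
    integrable_finsetSum _ fun j _ => hint k i j]
  refine sum_congr rfl fun k _ => ?_
  rw [integral_finsetSum _ fun i _ => integrable_finsetSum _ fun j _ => hint k i j]
  refine sum_congr rfl fun i _ => ?_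
  rw [integral_finsetSum _ fun j _ => hint k i j]
  exact sum_congr rfl fun j _ => integral_const_mul _ _

theorem sum_sum_integral_mul_nonneg (hw : ∀ i j, Integrable (fun ω => w ω i * w ω j) μ) :
    0 ≤ ∑ i, ∑ j, ∫ ω, w ω i * w ω j ∂μ := by
  have hsq : ∑ i, ∑ j, ∫ ω, w ω i * w ω j ∂μ = ∫ ω, (∑ i, w ω i) ^ 2 ∂μ := by
    simp only [sq, sum_mul_sum]
    rw [integral_finsetSum _ fun i _ => integrable_finsetSum _ fun j _ => hw i j]
    exact sum_congr rfl fun i _ => (integral_finsetSum _ fun j _ => hw i j).symm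
  exact hsq ▸ integral_nonneg fun ω => sq_nonneg _

theorem card_mul_pred_mul_sum_perm_integral_sum_mulVec_sq [DecidableEq α] {κ : Type*} [Fintype κ]
    {G : Matrix κ α ℝ} (hG : G *ᵥ 1 = 0) (hw : ∀ i j, Integrable (fun ω => w ω i * w ω j) μ) :
    (Fintype.card α : ℝ) * (Fintype.card α - 1) *
        ∑ σ : Equiv.Perm α, ∫ ω, ∑ k, (G *ᵥ fun i => w ω (σ⁻¹ i)) k ^ 2 ∂μ
      = (Fintype.card α).factorial * (Fintype.card α * ∑ p, ∫ ω, w ω p * w ω p ∂μ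
          - ∑ p, ∑ q, ∫ ω, w ω p * w ω q ∂μ) * ∑ k, ∑ i, G k i ^ 2 := by
  have hrow : ∀ k, ∑ i, G k i = 0 := fun k => by
    simpa [mulVec, dotProduct] using congrFun hG k
  rw [sum_congr rfl fun σ _ => integral_sum_mulVec_sq G fun i j => hw (σ⁻¹ i) (σ⁻¹ j),
    ← Equiv.sum_comp (Equiv.inv (Equiv.Perm α))]
  simp only [Equiv.inv_apply, inv_inv]
  rw [sum_comm, mul_sum, mul_sum]
  exact sum_congr rfl fun k _ =>
    Equiv.Perm.card_mul_pred_mul_sum_quadratic (hrow k) fun p q => ∫ ω, w ω p * w ω q ∂μ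

end SecondMoments

theorem integrable_sub_const_mul_sub_const {Ω : Type*} [MeasurableSpace Ω] {μ : Measure Ω}
    [IsFiniteMeasure μ] {f g : Ω → ℝ} (hf : AEStronglyMeasurable f μ)
    (hg : AEStronglyMeasurable g μ) (hff : Integrable (fun ω => f ω * f ω) μ)
    (hgg : Integrable (fun ω => g ω * g ω) μ) (a b : ℝ) :
    Integrable (fun ω => (f ω - a) * (g ω - b)) μ := by
  have hfL2 := (memLp_two_iff_integrable_sq hf).2 (by simpa [sq] using hff)
  have hgL2 := (memLp_two_iff_integrable_sq hg).2 (by simpa [sq] using hgg)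
  exact (hfL2.sub (memLp_const a)).integrable_mul (hgL2.sub (memLp_const b))

theorem stmt17_general {Ω : Type*} [MeasurableSpace Ω] (μ : Measure Ω) [IsProbabilityMeasure μ]
    (n d : ℕ) (hn : 2 ≤ n)
    (G : Matrix (Fin d) (Fin n) ℝ)
    (hG1 : G.mulVec (fun _ => 1) = 0)
    (σsq : ℝ) (hσ : σsq = ∑ k, ∑ i, G k i ^ 2)
    (β : Ω → Fin n → ℝ) (hβmeas : Measurable β)
    (hint : ∀ i j, Integrable (fun ω => β ω i * β ω j) μ)
    (r : ℝ) (hr : r = (1 / n : ℝ) * ∫ ω, ∑ i, (β ω i - 1) ^ 2 ∂μ) :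
    ((n.factorial : ℝ))⁻¹ * ∑ σ : Equiv.Perm (Fin n),
        ∫ ω, ∑ k, (G.mulVec (fun i => β ω (σ⁻¹ i)) k) ^ 2 ∂μ
      ≤ r * (1 + 1 / ((n : ℝ) - 1)) * σsq := by
  set γ : Ω → Fin n → ℝ := fun ω i => β ω i - 1
  have hβi : ∀ i, AEStronglyMeasurable (fun ω => β ω i) μ := fun i =>
    ((measurable_pi_apply i).comp hβmeas).aestronglyMeasurable
  have hγ : ∀ i j, Integrable (fun ω => γ ω i * γ ω j) μ := fun i j =>
    integrable_sub_const_mul_sub_const (hβi i) (hβi j) (hint i i) (hint j j) 1 1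
  have hshift : ∀ (σ : Equiv.Perm (Fin n)) ω,
      G *ᵥ (fun i => β ω (σ⁻¹ i)) = G *ᵥ (fun i => γ ω (σ⁻¹ i)) := fun σ ω => by
    rw [show (fun i => γ ω (σ⁻¹ i)) = (fun i => β ω (σ⁻¹ i)) - fun _ => 1 from rfl, mulVec_sub,
      hG1, sub_zero]
  have htrace : ∑ p, ∫ ω, γ ω p * γ ω p ∂μ = n * r := by
    rw [hr, ← integral_finsetSum _ fun p _ => hγ p p]
    field_simp
    simp only [γ, sq]
  have hperm := card_mul_pred_mul_sum_perm_integral_sum_mulVec_sq hG1 hγ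
  simp only [Fintype.card_fin, ← hshift, ← hσ, htrace] at hperm
  have hn1 : (0 : ℝ) < n - 1 := sub_pos.2 (by exact_mod_cast hn)
  have hσ0 : 0 ≤ σsq := hσ ▸ by positivity
  calc _ = (n.factorial : ℝ)⁻¹ * (n.factorial * (n * (n * r)
          - ∑ p, ∑ q, ∫ ω, γ ω p * γ ω q ∂μ) * σsq / (n * (n - 1))) := by
        rw [← hperm]
        field_simp
    _ ≤ (n.factorial : ℝ)⁻¹ * (n.factorial * (n * (n * r)) * σsq / (n * (n - 1))) := by
        have hsum := sum_sum_integral_mul_nonneg hγ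
        gcongr
        linarith
    _ = r * (1 + 1 / ((n : ℝ) - 1)) * σsq := by
        field_simp
        ring

/-- Let `G ∈ ℝ^{d×n}` with `G 𝟙 = 0` and `σsq = Tr(GᵀG)`. Let `β` be a
random vector with `E[β] = 𝟙` and `r = (1/n) E[|β - 𝟙|₂²]`, and let `ρ` be an independent
uniformly random permutation of the coordinates (the expectation below averages uniformly
over all permutations). Then `E[|G ρ⁻¹(β)|₂²] ≤ r (1 + 1/(n-1)) σsq`. -/
theorem stmt17 {Ω : Type*} [MeasurableSpace Ω] (μ : Measure Ω) [IsProbabilityMeasure μ]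
    (n d : ℕ) (hn : 2 ≤ n)
    (G : Matrix (Fin d) (Fin n) ℝ)
    (hG1 : G.mulVec (fun _ => 1) = 0)
    (σsq : ℝ) (hσ : σsq = ∑ k, ∑ i, G k i ^ 2)
    (β : Ω → Fin n → ℝ) (hβmeas : Measurable β)
    (hmean : ∀ i, ∫ ω, β ω i ∂μ = 1)
    (hint : ∀ i j, Integrable (fun ω => β ω i * β ω j) μ)
    (r : ℝ) (hr : r = (1 / n : ℝ) * ∫ ω, ∑ i, (β ω i - 1) ^ 2 ∂μ) :
    ((n.factorial : ℝ))⁻¹ * ∑ σ : Equiv.Perm (Fin n),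
        ∫ ω, ∑ k, (G.mulVec (fun i => β ω (σ⁻¹ i)) k) ^ 2 ∂μ
      ≤ r * (1 + 1 / ((n : ℝ) - 1)) * σsq :=
  stmt17_general μ n d hn G hG1 σsq hσ β hβmeas hint r hr
end
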